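/- Let X : ℝ → ℝ³ be a twice continuously differentiable curve, L := ‖X'‖ > 0, T := X'/L with first component T₁ satisfying T₁² < 1 everywhere, and let N₁ = (T₁·T − e₁)/√(1 − T₁²), N₂ = (e₁ × T)/√(1 − T₁²) be the interaction frame. Then the torsion-type coefficient of the frame satisfies (N₁'·N₂) = (T₁/√(1 − T₁²))·(T'·N₂) at every point; i.e., writing κ₂ and ω for the Frenet coefficients determined by T_q·N₂ and N₁_q·N₂, one has ω = κ₂·x₁ₛ/√(L² − x₁ₛ²) up to a common orientation sign, where x₁ₛ = L·T₁. -/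

import Mathlib

/-!
Write `N₁ = φ • (T₁ • T - e₁)` with `φ = 1/√(1 - T₁²)` and `N₂ = φ • (e₁ × T)`. Differentiating
the product, `N₁' = φ' • (T₁ • T - e₁) + φ • (T₁' • T + T₁ • T')`, and since `N₂` is orthogonal to
both `T` and `e₁`, every term except `φ T₁ (T' · N₂)` vanishes after pairing with `N₂`.
-/

noncomputable def cross3 (a b : Fin 3 → ℝ) : Fin 3 → ℝ :=
  ![a 1 * b 2 - a 2 * b 1, a 2 * b 0 - a 0 * b 2, a 0 * b 1 - a 1 * b 0]

noncomputable def norm3 (a : Fin 3 → ℝ) : ℝ :=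
  Real.sqrt ((a 0) ^ 2 + (a 1) ^ 2 + (a 2) ^ 2)

noncomputable def dot3 (a b : Fin 3 → ℝ) : ℝ :=
  a 0 * b 0 + a 1 * b 1 + a 2 * b 2

noncomputable def e1 : Fin 3 → ℝ := ![1, 0, 0]

open Matrix

theorem dot3_eq_dotProduct (a b : Fin 3 → ℝ) : dot3 a b = a ⬝ᵥ b := by
  simp [dot3, dotProduct, Fin.sum_univ_three]

theorem cross3_eq_crossProduct (a b : Fin 3 → ℝ) : cross3 a b = a ⨯₃ b := by
  rw [cross_apply, cross3]

theorem DifferentiableAt.norm3 {V : ℝ → Fin 3 → ℝ} {s : ℝ} (hV : DifferentiableAt ℝ V s)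
    (hne : norm3 (V s) ≠ 0) : DifferentiableAt ℝ (fun t => norm3 (V t)) s := by
  unfold _root_.norm3 at hne ⊢
  exact DifferentiableAt.sqrt (by fun_prop) fun h => hne (by rw [h, Real.sqrt_zero])

theorem dotProduct_smul_cross_eq_zero_left (c : ℝ) (a b : Fin 3 → ℝ) :
    a ⬝ᵥ c • (a ⨯₃ b) = 0 := by
  rw [dotProduct_smul, dot_self_cross, smul_zero]

theorem dotProduct_smul_cross_eq_zero_right (c : ℝ) (a b : Fin 3 → ℝ) :
    b ⬝ᵥ c • (a ⨯₃ b) = 0 := by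
  rw [dotProduct_smul, dot_cross_self, smul_zero]

theorem deriv_smul_smul_sub_dotProduct {ι : Type*} [Fintype ι] {φ ψ : ℝ → ℝ} {V : ℝ → ι → ℝ}
    {s : ℝ} (e n : ι → ℝ) (hφ : DifferentiableAt ℝ φ s) (hψ : DifferentiableAt ℝ ψ s)
    (hV : DifferentiableAt ℝ V s) (hVn : V s ⬝ᵥ n = 0) (hen : e ⬝ᵥ n = 0) :
    deriv (fun t => φ t • (ψ t • V t - e)) s ⬝ᵥ n = φ s * ψ s * (deriv V s ⬝ᵥ n) := by
  have hW : HasDerivAt (fun t => ψ t • V t - e) (ψ s • deriv V s + deriv ψ s • V s) s :=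
    (hψ.hasDerivAt.smul hV.hasDerivAt).sub_const e
  have hφW : HasDerivAt (fun t => φ t • (ψ t • V t - e))
      (φ s • (ψ s • deriv V s + deriv ψ s • V s) + deriv φ s • (ψ s • V s - e)) s :=
    hφ.hasDerivAt.smul hW
  rw [hφW.deriv]
  simp only [add_dotProduct, smul_dotProduct, sub_dotProduct, hVn, hen, smul_eq_mul]
  ring

/-- in the interaction frame, `N₁'·N₂ = (T₁/√(1 − T₁²))·(T'·N₂)`, i.e.
the torsion-type coefficient satisfies `ω = κ₂·x₁ₛ/√(L² − x₁ₛ²)` up to a common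
orientation sign. -/
theorem stmt19 (X : ℝ → Fin 3 → ℝ) (hX : ContDiff ℝ 2 X)
    (L : ℝ → ℝ) (hL : ∀ s, L s = norm3 (deriv X s)) (hLpos : ∀ s, 0 < L s)
    (T : ℝ → Fin 3 → ℝ) (hT : ∀ s, T s = (1 / L s) • deriv X s)
    (hT1 : ∀ s, (T s 0) ^ 2 < 1)
    (N₁ N₂ : ℝ → Fin 3 → ℝ)
    (hN₁ : ∀ s, N₁ s = (1 / Real.sqrt (1 - (T s 0) ^ 2)) • (T s 0 • T s - e1))
    (hN₂ : ∀ s, N₂ s = (1 / Real.sqrt (1 - (T s 0) ^ 2)) • cross3 e1 (T s)) :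
    ∀ s : ℝ,
      dot3 (deriv N₁ s) (N₂ s)
        = (T s 0 / Real.sqrt (1 - (T s 0) ^ 2)) * dot3 (deriv T s) (N₂ s) := by
  intro s
  have hTs : DifferentiableAt ℝ T s := by
    have hX' : DifferentiableAt ℝ (deriv X) s := hX.differentiable_deriv_two s
    have hL' : DifferentiableAt ℝ L s := by
      rw [funext hL]
      exact hX'.norm3 (hL s ▸ (hLpos s).ne')
    rw [funext hT]
    exact ((differentiableAt_const 1).div hL' (hLpos s).ne').smul hX'
  have hT0 : DifferentiableAt ℝ (fun t => T t 0) s := differentiableAt_pi.mp hTs 0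
  have hφ : DifferentiableAt ℝ (fun t => 1 / Real.sqrt (1 - (T t 0) ^ 2)) s := by
    have hw : 0 < 1 - (T s 0) ^ 2 := sub_pos.mpr (hT1 s)
    exact (differentiableAt_const 1).div ((hT0.pow 2).const_sub 1 |>.sqrt hw.ne')
      (Real.sqrt_pos.mpr hw).ne'
  rw [hN₂, cross3_eq_crossProduct, funext hN₁, dot3_eq_dotProduct, dot3_eq_dotProduct,
    deriv_smul_smul_sub_dotProduct e1 _ hφ hT0 hTs
      (dotProduct_smul_cross_eq_zero_right _ _ _) (dotProduct_smul_cross_eq_zero_left _ _ _)]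
  ring
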